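/- arXiv:1909.08680 — 8 statements merged into one kernel-verified Lean document; each statement's English description precedes it below -/
import Mathlib

section
/- For all integers n ≥ 1 and N with 3N ≥ 5n + 6, every 2-coloring of the Boolean lattice Q_N contains a red copy of Q_2 or a blue copy of Q_n. (Equivalently, the poset Ramsey number satisfies R(Q_2, Q_n) ≤ (5/3)n + 2.) -/
/-
Split the ground set into `X`, of size `n`, and `Y`, and suppose there is no red `Q₂`. Try to
embed `Q_n` in blue by `S ↦ S ∪ tail S` for `S ⊆ X`, where `tail S ⊆ Y` contains the tails
of all `S \ {x}` (their union being `lowerTail S`) and adds the colex-least `B` making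
`S ∪ lowerTail S ∪ B` blue. If this never gets stuck, it is a blue copy of `Q_n`.

If it gets stuck at `S`, every set between `S ∪ lowerTail S` and `S ∪ Y` is red, and as there is
no red `Q₂`, `lowerTail S` misses at most one element of `Y`. Colex-minimality shows that below
any element of a chosen completion at most one element of `Y` is missing, and descending along
maxima yields a red `M ⊆ S` with `|lowerTail S| ≤ 2 |S \ M|`. So the red sets `M` and
`S ∪ lowerTail S` are at distance at least `3 (|Y| - 1) / 2 ≥ n + 2`. The red sets between them
form a chain, so two elements `u`, `v` of the difference can be chosen such that every red set
in between containing `v` contains `u`; the sets `M ∪ {v} ∪ T`, `T` avoiding `u` and `v`, form a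
blue `Q_n`.
-/

/-- A red copy of the Boolean lattice `Q m` inside the 2-colored Boolean lattice `Q N`,
where `c S = true` means `S` is red and `c S = false` means `S` is blue. -/
def HasRedCopy (m N : ℕ) (c : Finset (Fin N) → Bool) : Prop :=
  ∃ f : Finset (Fin m) → Finset (Fin N),
    Function.Injective f ∧
    (∀ S T : Finset (Fin m), S ⊆ T ↔ f S ⊆ f T) ∧
    (∀ S : Finset (Fin m), c (f S) = true)

/-- A blue copy of the Boolean lattice `Q m` inside the 2-colored Boolean lattice `Q N`. -/
def HasBlueCopy (m N : ℕ) (c : Finset (Fin N) → Bool) : Prop :=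
  ∃ f : Finset (Fin m) → Finset (Fin N),
    Function.Injective f ∧
    (∀ S T : Finset (Fin m), S ⊆ T ↔ f S ⊆ f T) ∧
    (∀ S : Finset (Fin m), c (f S) = false)

open Finset

variable {α β : Type*}

section Copies
variable {N m : ℕ} {c : Finset (Fin N) → Bool}

lemma hasRedCopy_of_orderEmbedding (f : Finset (Fin m) ↪o Finset (Fin N))
    (hf : ∀ S, c (f S) = true) : HasRedCopy m N c :=
  ⟨f, f.injective, fun _ _ => f.le_iff_le.symm, hf⟩

lemma hasBlueCopy_of_orderEmbedding (f : Finset (Fin m) ↪o Finset (Fin N))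
    (hf : ∀ S, c (f S) = false) : HasBlueCopy m N c :=
  ⟨f, f.injective, fun _ _ => f.le_iff_le.symm, hf⟩

end Copies

lemma Fin.two_subset_iff {S T : Finset (Fin 2)} :
    S ⊆ T ↔ (0 ∈ S → 0 ∈ T) ∧ (1 ∈ S → 1 ∈ T) := by
  simp only [subset_iff, Fin.forall_fin_two]

lemma exists_orderEmbedding_of_diamond {p : Finset α → Prop} {A B C D : Finset α}
    (hAB : A ⊆ B) (hAC : A ⊆ C) (hBD : B ⊆ D) (hCD : C ⊆ D)
    (hBC : ¬B ⊆ C) (hCB : ¬C ⊆ B)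
    (hA : p A) (hB : p B) (hC : p C) (hD : p D) :
    ∃ f : Finset (Fin 2) ↪o Finset α, ∀ S, p (f S) := by
  let f (S : Finset (Fin 2)) : Finset α :=
    if 0 ∈ S then (if 1 ∈ S then D else B) else (if 1 ∈ S then C else A)
  have hAD := hAB.trans hBD
  have hBA : ¬B ⊆ A := fun h => hBC (h.trans hAC)
  have hCA : ¬C ⊆ A := fun h => hCB (h.trans hAB)
  have hDB : ¬D ⊆ B := fun h => hCB (hCD.trans h)
  have hDC : ¬D ⊆ C := fun h => hBC (hBD.trans h)
  have hDA : ¬D ⊆ A := fun h => hDB (h.trans hAB)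
  have hf : ∀ S T, f S ≤ f T ↔ S ≤ T := by
    intro S T
    simp only [f, Fin.two_subset_iff]
    split_ifs <;> simp_all
  refine ⟨OrderEmbedding.ofMapLEIff f hf, fun S => ?_⟩
  simp only [OrderEmbedding.coe_ofMapLEIff, f]
  split_ifs <;> assumption

def NoRedDiamond (c : Finset α → Bool) : Prop :=
  ∀ ⦃A B C D : Finset α⦄, A ⊆ B → A ⊆ C → B ⊆ D → C ⊆ D →
    c A = true → c B = true → c C = true → c D = true → B ⊆ C ∨ C ⊆ B

lemma noRedDiamond_of_not_hasRedCopy {N : ℕ} {c : Finset (Fin N) → Bool}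
    (h : ¬HasRedCopy 2 N c) : NoRedDiamond c := by
  intro A B C D hAB hAC hBD hCD hA hB hC hD
  by_contra! hBC
  obtain ⟨f, hf⟩ := exists_orderEmbedding_of_diamond (p := (c · = true))
    hAB hAC hBD hCD hBC.1 hBC.2 hA hB hC hD
  exact h (hasRedCopy_of_orderEmbedding f hf)

section MapUnion
variable [DecidableEq α]

def mapUnionEmbedding (e : β ↪ α) (g : Finset β → Finset α) (hg : Monotone g)
    (hge : ∀ S b, e b ∉ g S) : Finset β ↪o Finset α :=
  OrderEmbedding.ofMapLEIff (fun S => S.map e ∪ g S) fun S T =>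
    ⟨fun h b hb => by
      have := h (mem_union_left _ (mem_map_of_mem e hb))
      simpa [hge] using this,
    fun h => union_subset_union (map_subset_map.2 h) (hg h)⟩

@[simp]
lemma mapUnionEmbedding_apply (e : β ↪ α) (g : Finset β → Finset α) (hg : Monotone g)
    (hge : ∀ S b, e b ∉ g S) (S : Finset β) :
    mapUnionEmbedding e g hg hge S = S.map e ∪ g S := rfl

end MapUnion

namespace NoRedDiamond
variable [DecidableEq α] {c : Finset α → Bool}

lemma exists_blue_union (hc : NoRedDiamond c) {K W : Finset α} (hKW : Disjoint K W)
    (hW : 1 < #W) : ∃ B ⊆ W, c (K ∪ B) = false := by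
  obtain ⟨a, ha, b, hb, hab⟩ := one_lt_card.1 hW
  by_contra! hred
  simp only [ne_eq, Bool.not_eq_false] at hred
  have haK : a ∉ K := disjoint_right.1 hKW ha
  have hbK : b ∉ K := disjoint_right.1 hKW hb
  have hsq := hc (A := K) (B := K ∪ {a}) (C := K ∪ {b}) (D := K ∪ {a, b})
    subset_union_left subset_union_left (by gcongr; simp) (by gcongr; simp)
    (by simpa using hred ∅ (empty_subset W)) (hred _ (by simpa using ha))
    (hred _ (by simpa using hb)) (hred _ (by simp [insert_subset_iff, ha, hb]))
  rcases hsq with h | h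
  · simpa [haK, hab] using h (mem_union_right K (mem_singleton_self a))
  · simpa [hbK, hab.symm] using h (mem_union_right K (mem_singleton_self b))

/-- The red sets between `A` and `D` form a chain, so of two new elements one forces the other. -/
lemma exists_forcing_pair (hc : NoRedDiamond c) {A D : Finset α}
    (hA : c A = true) (hD : c D = true) (hAD : 1 < #(D \ A)) :
    ∃ u ∈ D \ A, ∃ v ∈ D \ A, u ≠ v ∧
      ∀ E, A ⊆ E → E ⊆ D → c E = true → v ∈ E → u ∈ E := by
  obtain ⟨u, hu, v, hv, huv⟩ := one_lt_card.1 hAD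
  by_cases hvu : ∀ E, A ⊆ E → E ⊆ D → c E = true → v ∈ E → u ∈ E
  · exact ⟨u, hu, v, hv, huv, hvu⟩
  push Not at hvu
  obtain ⟨E₀, hAE₀, hE₀D, hE₀, hvE₀, huE₀⟩ := hvu
  refine ⟨v, hv, u, hu, huv.symm, fun E hAE hED hE huE => ?_⟩
  rcases hc hAE hAE₀ hED hE₀D hA hE hE₀ hD with h | h
  · exact absurd (h huE) huE₀
  · exact h hvE₀

lemma exists_blue_copy_of_red_pair [Fintype β] (hc : NoRedDiamond c) {A D : Finset α}
    (hAD : A ⊆ D) (hA : c A = true) (hD : c D = true) (hcard : Fintype.card β + 2 ≤ #(D \ A)) :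
    ∃ f : Finset β ↪o Finset α, ∀ S, c (f S) = false := by
  obtain ⟨u, hu, v, hv, huv, hforce⟩ := hc.exists_forcing_pair hA hD (by omega)
  set s := ((D \ A).erase u).erase v
  have hs : Fintype.card β ≤ Fintype.card s := by
    rw [Fintype.card_coe, card_erase_of_mem (mem_erase.2 ⟨huv.symm, hv⟩),
      card_erase_of_mem hu]
    omega
  obtain ⟨e₀⟩ := Function.Embedding.nonempty_of_card_le hs
  let e := e₀.trans (Function.Embedding.subtype _)
  have hes : ∀ b, e b ∈ s := fun b => (e₀ b).2
  refine ⟨mapUnionEmbedding e (fun _ => insert v A) monotone_const fun S b => ?_, fun S => ?_⟩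
  · have := hes b
    simp only [s, mem_erase, mem_sdiff] at this
    simp [this.1, this.2.2.2]
  have hsD : s ⊆ D \ A := (erase_subset _ _).trans (erase_subset _ _)
  have hmapD : S.map e ⊆ D := by
    intro x hx
    obtain ⟨b, -, rfl⟩ := mem_map.1 hx
    exact (mem_sdiff.1 (hsD (hes b))).1
  have hu' : u ∉ S.map e := by
    intro hx
    obtain ⟨b, -, hb⟩ := mem_map.1 hx
    simpa [s, hb] using hes b
  rw [mapUnionEmbedding_apply, ← Bool.not_eq_true]
  intro hred
  have huE := hforce _ (subset_union_right.trans' (subset_insert v A))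
    (union_subset hmapD (insert_subset (mem_sdiff.1 hv).1 hAD)) hred (by simp)
  simp only [mem_union, mem_insert, hu', huv, false_or] at huE
  exact (mem_sdiff.1 hu).2 huE

end NoRedDiamond

section Scheme
variable [LinearOrder α] (c : Finset α → Bool) (Y : Finset α)

def blueCompletions (S F : Finset α) : Finset (Finset α) :=
  {B ∈ (Y \ F).powerset | c (S ∪ F ∪ B) = false}

/-- `∅` (junk) when there is no blue completion. -/
noncomputable def leastBlueCompletion (S F : Finset α) : Finset α :=
  if h : (blueCompletions c Y S F).Nonempty then (exists_min_image _ toColex h).choose else ∅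

noncomputable def tail (S : Finset α) : Finset α :=
  let F := S.attach.biUnion fun x => tail (S.erase x)
  F ∪ leastBlueCompletion c Y S F
termination_by #S
decreasing_by exact card_erase_lt_of_mem x.2

noncomputable def lowerTail (S : Finset α) : Finset α :=
  S.biUnion fun x => tail c Y (S.erase x)

variable {c Y}

lemma leastBlueCompletion_mem {S F : Finset α} (h : (blueCompletions c Y S F).Nonempty) :
    leastBlueCompletion c Y S F ∈ blueCompletions c Y S F := by
  rw [leastBlueCompletion, dif_pos h]
  exact (exists_min_image _ toColex h).choose_spec.1

lemma leastBlueCompletion_le {S F B : Finset α} (hB : B ∈ blueCompletions c Y S F) :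
    toColex (leastBlueCompletion c Y S F) ≤ toColex B := by
  rw [leastBlueCompletion, dif_pos ⟨B, hB⟩]
  exact (exists_min_image _ toColex ⟨B, hB⟩).choose_spec.2 B hB

lemma leastBlueCompletion_subset (S F : Finset α) : leastBlueCompletion c Y S F ⊆ Y \ F := by
  by_cases h : (blueCompletions c Y S F).Nonempty
  · exact mem_powerset.1 (mem_filter.1 (leastBlueCompletion_mem h)).1
  · simp [leastBlueCompletion, h]

lemma red_of_mem_leastBlueCompletion {S F : Finset α} {y : α}
    (hy : y ∈ leastBlueCompletion c Y S F) : c (S ∪ F) = true := by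
  rw [← Bool.not_eq_false]
  intro hblue
  have hmin := leastBlueCompletion_le (Y := Y) (B := ∅)
    (mem_filter.2 ⟨empty_mem_powerset _, by simpa⟩)
  rw [Colex.toColex_empty, le_bot_iff, ← Colex.toColex_empty, toColex_inj] at hmin
  simp [hmin] at hy

lemma tail_eq (S : Finset α) :
    tail c Y S = lowerTail c Y S ∪ leastBlueCompletion c Y S (lowerTail c Y S) := by
  rw [tail, lowerTail, attach_biUnion (f := fun x => tail c Y (S.erase x))]

end Scheme

section TailProperties
variable [LinearOrder α] {c : Finset α → Bool} {Y : Finset α}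

lemma tail_subset (S : Finset α) : tail c Y S ⊆ Y := by
  induction S using strongInduction with
  | H S ih =>
    rw [tail_eq]
    refine union_subset (biUnion_subset.2 fun x hx => ih _ (erase_ssubset hx)) ?_
    exact (leastBlueCompletion_subset _ _).trans sdiff_subset

lemma lowerTail_subset (S : Finset α) : lowerTail c Y S ⊆ Y :=
  biUnion_subset.2 fun _ _ => tail_subset _

lemma tail_mono : Monotone (tail c Y) := by
  intro S T hST
  induction T using strongInduction generalizing S with
  | H T ih =>
    obtain rfl | hST := eq_or_ssubset_of_subset hST
    · rfl
    obtain ⟨x, hxT, hxS⟩ := exists_of_ssubset hST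
    calc tail c Y S ⊆ tail c Y (T.erase x) :=
          ih _ (erase_ssubset hxT) (subset_erase.2 ⟨hST.subset, hxS⟩)
      _ ⊆ lowerTail c Y T := subset_biUnion_of_mem (fun x => tail c Y (T.erase x)) hxT
      _ ⊆ tail c Y T := tail_eq T ▸ subset_union_left

lemma exists_mem_leastBlueCompletion_of_mem_tail {S : Finset α} {y : α} (hy : y ∈ tail c Y S) :
    ∃ V ⊆ S, y ∈ leastBlueCompletion c Y V (lowerTail c Y V) := by
  induction S using strongInduction with
  | H S ih =>
    rw [tail_eq, mem_union] at hy
    rcases hy with hy | hy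
    · obtain ⟨x, hx, hyx⟩ := mem_biUnion.1 hy
      obtain ⟨V, hV, hyV⟩ := ih _ (erase_ssubset hx) hyx
      exact ⟨V, hV.trans (erase_subset x S), hyV⟩
    · exact ⟨S, subset_rfl, hy⟩

end TailProperties

lemma card_le_card_add_two [LinearOrder α] {s Y F : Finset α} {y : α} (hsY : s ⊆ Y)
    (hsy : ∀ z ∈ s, z ≤ y) (hY : #{z ∈ Y \ F | z < y} ≤ 1) : #s ≤ #F + 2 := by
  have hs : s ⊆ insert y ({z ∈ Y \ F | z < y} ∪ F) := by
    intro z hz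
    rcases (hsy z hz).lt_or_eq with hzy | rfl
    · by_cases hzF : z ∈ F <;> simp [hzF, hsY hz, hzy]
    · exact mem_insert_self z _
  calc #s ≤ #{z ∈ Y \ F | z < y} + #F + 1 :=
        (card_le_card hs).trans ((card_insert_le _ _).trans (by gcongr; exact card_union_le _ _))
    _ ≤ #F + 2 := by omega

lemma exists_blue_copy_of_blueCompletions_nonempty [LinearOrder α] {c : Finset α → Bool}
    {Y : Finset α} (e : β ↪ α) (he : ∀ b, e b ∉ Y)
    (h : ∀ S : Finset β, (blueCompletions c Y (S.map e) (lowerTail c Y (S.map e))).Nonempty) :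
    ∃ f : Finset β ↪o Finset α, ∀ S, c (f S) = false := by
  refine ⟨mapUnionEmbedding e (fun S => tail c Y (S.map e))
    (tail_mono.comp fun _ _ h => map_subset_map.2 h) (fun S b hb => he b (tail_subset _ hb)),
    fun S => ?_⟩
  rw [mapUnionEmbedding_apply, tail_eq, ← union_assoc]
  exact (mem_filter.1 (leastBlueCompletion_mem (h S))).2

namespace NoRedDiamond
variable [LinearOrder α] {c : Finset α → Bool} {Y : Finset α}

lemma blueCompletions_nonempty (hc : NoRedDiamond c) {S F : Finset α} (hS : Disjoint S Y)
    (hYF : 1 < #(Y \ F)) : (blueCompletions c Y S F).Nonempty := by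
  have hdisj : Disjoint (S ∪ F) (Y \ F) :=
    disjoint_union_left.2 ⟨hS.mono_right sdiff_subset, disjoint_sdiff⟩
  obtain ⟨B, hB, hblue⟩ := hc.exists_blue_union hdisj hYF
  exact ⟨B, mem_filter.2 ⟨mem_powerset.2 hB, hblue⟩⟩

/-- Every set of elements of `Y \ F` below `y` is colex-smaller than the least blue completion,
hence a red completion; two such elements would span a red diamond. -/
lemma card_filter_lt_le_one (hc : NoRedDiamond c) {V F : Finset α} (hV : Disjoint V Y) {y : α}
    (hy : y ∈ leastBlueCompletion c Y V F) : #{z ∈ Y \ F | z < y} ≤ 1 := by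
  by_contra! h
  have hdisj : Disjoint (V ∪ F) {z ∈ Y \ F | z < y} :=
    disjoint_union_left.2 ⟨hV.mono_right (filter_subset _ _ |>.trans sdiff_subset),
      disjoint_sdiff.mono_right (filter_subset _ _)⟩
  obtain ⟨B, hB, hblue⟩ := hc.exists_blue_union hdisj h
  have hmin := leastBlueCompletion_le
    (mem_filter.2 ⟨mem_powerset.2 (hB.trans (filter_subset _ _)), hblue⟩)
  have hBy : ∀ z ∈ B, z < y := fun z hz => (mem_filter.1 (hB hz)).2
  exact lt_irrefl y (Colex.forall_lt_mono hmin hBy y hy)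

/-- Descend from `T` to the set `V` whose least blue completion contains the maximum of
`lowerTail c Y T`: each step loses an element of `T` and at most two elements of the tail. -/
lemma exists_red_subset (hc : NoRedDiamond c) (T : Finset α) (hT : Disjoint T Y)
    (hred : c (T ∪ lowerTail c Y T) = true) :
    ∃ M ⊆ T, c M = true ∧ #(lowerTail c Y T) ≤ 2 * #(T \ M) := by
  induction T using strongInduction with
  | H T ih =>
    obtain hF | hF := (lowerTail c Y T).eq_empty_or_nonempty
    · exact ⟨T, subset_rfl, by simpa [hF] using hred, by simp [hF]⟩
    obtain ⟨x, hxT, hyx⟩ := mem_biUnion.1 (max'_mem _ hF)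
    obtain ⟨V, hVx, hyV⟩ := exists_mem_leastBlueCompletion_of_mem_tail hyx
    have hVT : V ⊂ T := hVx.trans_ssubset (erase_ssubset hxT)
    obtain ⟨M, hMV, hM, hcardV⟩ := ih V hVT (hT.mono_left hVT.subset)
      (red_of_mem_leastBlueCompletion hyV)
    have hcardT : #(lowerTail c Y T) ≤ #(lowerTail c Y V) + 2 :=
      card_le_card_add_two (lowerTail_subset T) (fun z hz => le_max' _ z hz)
        (hc.card_filter_lt_le_one (hT.mono_left hVT.subset) hyV)
    have hMT : #(V \ M) < #(T \ M) := by
      rw [card_sdiff_of_subset hMV, card_sdiff_of_subset (hMV.trans hVT.subset)]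
      have := card_lt_card hVT
      have := card_le_card hMV
      omega
    exact ⟨M, hMV.trans hVT.subset, hM, by omega⟩

lemma exists_far_red_pair (hc : NoRedDiamond c) {S : Finset α} (hS : Disjoint S Y)
    (hempty : blueCompletions c Y S (lowerTail c Y S) = ∅) :
    ∃ A D, A ⊆ D ∧ c A = true ∧ c D = true ∧ 3 * #Y ≤ 2 * #(D \ A) + 3 := by
  set F := lowerTail c Y S
  have hYF : #(Y \ F) ≤ 1 := by
    by_contra! h
    simpa [hempty] using hc.blueCompletions_nonempty hS h
  have hred : c (S ∪ F) = true := by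
    rw [← Bool.not_eq_false]
    intro hblue
    have : ∅ ∈ blueCompletions c Y S F := mem_filter.2 ⟨empty_mem_powerset _, by simpa⟩
    simp [hempty] at this
  obtain ⟨M, hMS, hM, hcard⟩ : ∃ M ⊆ S, c M = true ∧ #F ≤ 2 * #(S \ M) :=
    hc.exists_red_subset S hS hred
  have hFY : F ⊆ Y := lowerTail_subset S
  have hsub : (S \ M) ∪ F ⊆ (S ∪ F) \ M :=
    union_subset (sdiff_subset_sdiff subset_union_left subset_rfl)
      (subset_sdiff.2 ⟨subset_union_right, (hS.mono hMS hFY).symm⟩)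
  have hSF : Disjoint (S \ M) F := hS.mono sdiff_subset hFY
  have := card_le_card hsub
  rw [card_union_of_disjoint hSF] at this
  have := card_sdiff_add_card_eq_card hFY
  exact ⟨M, S ∪ F, hMS.trans subset_union_left, hM, hred, by omega⟩

lemma exists_blue_copy_or_far_red_pair (hc : NoRedDiamond c) (e : β ↪ α)
    (he : ∀ b, e b ∉ Y) :
    (∃ f : Finset β ↪o Finset α, ∀ S, c (f S) = false) ∨
      ∃ A D, A ⊆ D ∧ c A = true ∧ c D = true ∧ 3 * #Y ≤ 2 * #(D \ A) + 3 := by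
  by_cases h : ∀ S : Finset β,
      (blueCompletions c Y (S.map e) (lowerTail c Y (S.map e))).Nonempty
  · exact .inl (exists_blue_copy_of_blueCompletions_nonempty e he h)
  push Not at h
  obtain ⟨S, hS⟩ := h
  refine .inr (hc.exists_far_red_pair (disjoint_left.2 fun x hx hxY => ?_) hS)
  obtain ⟨b, -, rfl⟩ := mem_map.1 hx
  exact he b hxY

end NoRedDiamond

theorem ramsey_Q2_Qn_general (n N : ℕ) (hN : 3 * N ≥ 5 * n + 6)
    (c : Finset (Fin N) → Bool) :
    HasRedCopy 2 N c ∨ HasBlueCopy n N c := by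
  refine or_iff_not_imp_left.2 fun hR => ?_
  have hc := noRedDiamond_of_not_hasRedCopy hR
  let e : Fin n ↪ Fin N := Fin.castLEEmb (by omega)
  have hY : #((univ.map e)ᶜ) = N - n := by simp [card_compl]
  obtain ⟨f, hf⟩ | ⟨A, D, hAD, hA, hD, hcard⟩ :=
    hc.exists_blue_copy_or_far_red_pair (Y := (univ.map e)ᶜ) e (by simp)
  · exact hasBlueCopy_of_orderEmbedding f hf
  · obtain ⟨f, hf⟩ := hc.exists_blue_copy_of_red_pair (β := Fin n) hAD hA hD
      (by rw [Fintype.card_fin]; omega)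
    exact hasBlueCopy_of_orderEmbedding f hf

/-- If n ≥ 1 and 3N ≥ 5n + 6, every 2-coloring of Q_N contains a red copy
of Q_2 or a blue copy of Q_n, i.e. R(Q_2, Q_n) ≤ (5/3)n + 2. -/
theorem ramsey_Q2_Qn (n N : ℕ) (hn : 1 ≤ n) (hN : 3 * N ≥ 5 * n + 6)
    (c : Finset (Fin N) → Bool) :
    HasRedCopy 2 N c ∨ HasBlueCopy n N c :=
  ramsey_Q2_Qn_general n N hN c
end

section
/- (Key embedding lemma.) Let N, m, n, n', a, b be nonnegative integers with N ≥ n' ≥ n ≥ a + b, N ≥ m, and N ≥ n' + (n + 1 − a − b)·m. Let c be a 2-coloring of the Boolean lattice Q_N on ground set [N], and suppose there exists an injection i from the subsets of [n] to the subsets of [n'] satisfying S ⊆ T if and only if i(S) ⊆ i(T), such that: (1) for every S ⊆ [n] with |S| < a, the set i(S) is blue; and (2) for every S ⊆ [n] with |S| > n − b, the set i(S) ∪ ([N] \ [n']) is blue. Then Q_N contains a blue copy of Q_n or a red copy of Q_m. -/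
/-!
Give every middle layer `l ∈ [a, n - b]` of `Q_n` its own block of `m` fresh coordinates beyond
`n'`, the blocks following each other in the order of the layers. For a set `S` in layer `l`,
the points `i(S) ∪ [n', start of block l) ∪ T`, `T` a subset of block `l`, form a copy of `Q_m`.
If one of these copies is red we are done. Otherwise choose a blue point in each of them; sending
the middle-layer `S` to that point, the bottom layers to `i(S)` and the top layers to
`i(S) ∪ [n', N)` gives a blue copy of `Q_n`: the part of the image beyond `n'` only grows from
layer to layer, and the part below `n'` is `i(S)`.
-/

open Finset

def finIco (N lo hi : ℕ) : Finset (Fin N) := {x | lo ≤ (x : ℕ) ∧ (x : ℕ) < hi}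

section finIco

variable {N lo hi lo' hi' : ℕ}

@[simp]
theorem mem_finIco {x : Fin N} : x ∈ finIco N lo hi ↔ lo ≤ (x : ℕ) ∧ (x : ℕ) < hi := by
  simp [finIco]

theorem finIco_subset_finIco (hlo : lo' ≤ lo) (hhi : hi ≤ hi') :
    finIco N lo hi ⊆ finIco N lo' hi' := fun x hx => by
  simp only [mem_finIco] at hx ⊢
  omega

theorem disjoint_finIco_finIco (h : hi ≤ lo') :
    Disjoint (finIco N lo hi) (finIco N lo' hi') := by
  rw [disjoint_left]
  intro x hx hx'
  simp only [mem_finIco] at hx hx'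
  omega

theorem finIco_eq_empty (h : hi ≤ lo) : finIco N lo hi = ∅ := by
  ext x
  simp only [mem_finIco, notMem_empty, iff_false]
  omega

theorem finIco_right_eq_filter : finIco N lo N = univ.filter fun x : Fin N => lo ≤ (x : ℕ) := by
  ext x
  simp [x.isLt]

end finIco

theorem le_iff_union_subset_union {α β : Type*} [Preorder α] [DecidableEq β]
    {i g : α → Finset β} {L : Finset β} (hi : ∀ S T, S ≤ T ↔ i S ⊆ i T) (hiL : ∀ S, i S ⊆ L)
    (hgL : ∀ S, Disjoint L (g S)) (hg : Monotone g) (S T : α) :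
    S ≤ T ↔ i S ∪ g S ⊆ i T ∪ g T := by
  refine ⟨fun h => union_subset_union ((hi S T).1 h) (hg h), fun h => (hi S T).2 ?_⟩
  intro x hx
  rcases mem_union.1 (h (mem_union_left _ hx)) with hxT | hxg
  · exact hxT
  · exact absurd hxg (disjoint_left.1 (hgL T) (hiL S hx))

theorem monotone_of_card_lt {α β : Type*} {g : Finset α → Finset β} (lo hi : ℕ → Finset β)
    (hlo : ∀ S, lo #S ⊆ g S) (hhi : ∀ S, g S ⊆ hi #S) (hstep : ∀ l l', l < l' → hi l ⊆ lo l') :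
    Monotone g := by
  intro S T hST
  rcases eq_or_ssubset_of_subset hST with rfl | hlt
  · exact subset_rfl
  · exact (hhi S).trans ((hstep _ _ (card_lt_card hlt)).trans (hlo T))

section Copies

variable {m n N : ℕ} {c : Finset (Fin N) → Bool}

theorem hasRedCopy_of_red_cube {k : ℕ} {A : Finset (Fin N)} (hk : k + m ≤ N)
    (hA : A ⊆ finIco N 0 k) (hred : ∀ T ⊆ finIco N k (k + m), c (A ∪ T) = true) :
    HasRedCopy m N c := by
  let e : Fin m ↪ Fin N := (Fin.natAddEmb k).trans (Fin.castLEEmb hk)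
  have he : ∀ T : Finset (Fin m), T.map e ⊆ finIco N k (k + m) := by
    intro T x hx
    obtain ⟨j, -, rfl⟩ := mem_map.1 hx
    simp [e]
  have hord : ∀ T T' : Finset (Fin m), T ⊆ T' ↔ T.map e ∪ A ⊆ T'.map e ∪ A :=
    le_iff_union_subset_union (fun _ _ => map_subset_map.symm) he
      (fun _ => (disjoint_finIco_finIco le_rfl).symm.mono_right hA) monotone_const
  refine ⟨fun T => T.map e ∪ A, ?_, hord, fun T => ?_⟩
  · exact (OrderEmbedding.ofMapLEIff _ fun T T' => (hord T T').symm).injective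
  · show c (T.map e ∪ A) = true
    rw [union_comm]
    exact hred _ (he T)

theorem hasBlueCopy_of_blue_points {n' : ℕ} {i : Finset (Fin n) → Finset (Fin N)}
    (hord : ∀ S T, S ⊆ T ↔ i S ⊆ i T) (hi : ∀ S, i S ⊆ finIco N 0 n') {s e : ℕ → ℕ}
    (hs : ∀ l, n' ≤ s l) (hse : ∀ l, s l ≤ e l) (hstep : ∀ l l', l < l' → e l ≤ s l')
    (hblue : ∀ S : Finset (Fin n), ∃ T ⊆ finIco N (s #S) (e #S),
      c (i S ∪ finIco N n' (s #S) ∪ T) = false) :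
    HasBlueCopy n N c := by
  choose T hT hTc using hblue
  have hmono : Monotone fun S => finIco N n' (s #S) ∪ T S :=
    monotone_of_card_lt (fun l => finIco N n' (s l)) (fun l => finIco N n' (e l))
      (fun _ => subset_union_left)
      (fun S => union_subset (finIco_subset_finIco le_rfl (hse _))
        ((hT S).trans (finIco_subset_finIco (hs _) le_rfl)))
      (fun _ _ hl => finIco_subset_finIco le_rfl (hstep _ _ hl))
  have hdisj : ∀ S, Disjoint (finIco N 0 n') (finIco N n' (s #S) ∪ T S) := fun S =>
    disjoint_union_right.2 ⟨disjoint_finIco_finIco le_rfl,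
      (disjoint_finIco_finIco (hs _)).mono_right (hT S)⟩
  have hord' := le_iff_union_subset_union hord hi hdisj hmono
  refine ⟨fun S => i S ∪ (finIco N n' (s #S) ∪ T S),
    (OrderEmbedding.ofMapLEIff _ fun S S' => (hord' S S').symm).injective, hord', fun S => ?_⟩
  simpa only [union_assoc] using hTc S

end Copies

section Layers

variable (N n n' m a b : ℕ)

/-- Block `l` of coordinates is `[layerStart l, layerEnd l)`: `m` coordinates for a middle layer,
an empty block at `n'` for a bottom layer and at `N` for a top layer. -/
def layerStart (l : ℕ) : ℕ := if l < a then n' else if l ≤ n - b then n' + (l - a) * m else N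

def layerEnd (l : ℕ) : ℕ := if l < a then n' else if l ≤ n - b then n' + (l - a + 1) * m else N

variable {N n n' m a b}

theorem le_layerStart (h : n' ≤ N) (l : ℕ) : n' ≤ layerStart N n n' m a b l := by
  unfold layerStart
  split_ifs <;> omega

theorem layerStart_le_layerEnd (l : ℕ) :
    layerStart N n n' m a b l ≤ layerEnd N n n' m a b l := by
  unfold layerStart layerEnd
  split_ifs <;> nlinarith

theorem layerEnd_eq_add {l : ℕ} (ha : a ≤ l) (hb : l ≤ n - b) :
    layerEnd N n n' m a b l = layerStart N n n' m a b l + m := by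
  simp only [layerStart, layerEnd, if_neg (not_lt.2 ha), if_pos hb]
  ring

theorem layerEnd_le (h : n' ≤ N) (hab : a + b ≤ n) (hN : N ≥ n' + (n + 1 - a - b) * m)
    (l : ℕ) : layerEnd N n n' m a b l ≤ N := by
  unfold layerEnd
  split_ifs with ha hb
  · exact h
  · exact le_trans (by gcongr; omega) hN
  · exact le_rfl

theorem layerEnd_le_layerStart (h : n' ≤ N) (hab : a + b ≤ n)
    (hN : N ≥ n' + (n + 1 - a - b) * m) {l l' : ℕ} (hl : l < l') :
    layerEnd N n n' m a b l ≤ layerStart N n n' m a b l' := by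
  have hend := layerEnd_le h hab hN l
  unfold layerStart layerEnd at *
  split_ifs at * <;> first | omega | gcongr; omega

end Layers

theorem embedding_lemma_general (N m n n' a b : ℕ)
    (h1 : n' ≤ N) (h3 : a + b ≤ n)
    (h5 : N ≥ n' + (n + 1 - a - b) * m)
    (c : Finset (Fin N) → Bool)
    (i : Finset (Fin n) → Finset (Fin N))
    (hord : ∀ S T : Finset (Fin n), S ⊆ T ↔ i S ⊆ i T)
    (hrange : ∀ S : Finset (Fin n), ∀ x ∈ i S, (x : ℕ) < n')
    (hbot : ∀ S : Finset (Fin n), S.card < a → c (i S) = false)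
    (htop : ∀ S : Finset (Fin n), S.card > n - b →
      c (i S ∪ Finset.univ.filter fun x : Fin N => n' ≤ (x : ℕ)) = false) :
    HasBlueCopy n N c ∨ HasRedCopy m N c := by
  have hi : ∀ S, i S ⊆ finIco N 0 n' := fun S x hx => by simpa using hrange S x hx
  set s := layerStart N n n' m a b
  set e := layerEnd N n n' m a b
  by_cases hred : ∃ S : Finset (Fin n), a ≤ #S ∧ #S ≤ n - b ∧
      ∀ T ⊆ finIco N (s #S) (e #S), c (i S ∪ finIco N n' (s #S) ∪ T) = true
  · obtain ⟨S, ha, hb, hS⟩ := hred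
    have hend : e #S = s #S + m := layerEnd_eq_add ha hb
    rw [hend] at hS
    refine Or.inr (hasRedCopy_of_red_cube (hend ▸ layerEnd_le h1 h3 h5 #S) ?_ hS)
    exact union_subset ((hi S).trans (finIco_subset_finIco le_rfl (le_layerStart h1 _)))
      (finIco_subset_finIco (Nat.zero_le _) le_rfl)
  · push Not at hred
    refine Or.inl (hasBlueCopy_of_blue_points hord hi (le_layerStart h1) layerStart_le_layerEnd
      (fun _ _ => layerEnd_le_layerStart h1 h3 h5) fun S => ?_)
    by_cases ha : #S < a
    · refine ⟨∅, empty_subset _, ?_⟩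
      simpa [s, layerStart, ha, finIco_eq_empty] using hbot S ha
    by_cases hb : #S ≤ n - b
    · simpa using hred S (not_lt.1 ha) hb
    · refine ⟨∅, empty_subset _, ?_⟩
      simpa [s, layerStart, ha, hb, ← finIco_right_eq_filter] using htop S (not_le.1 hb)

/-- key embedding lemma: given an order-embedded image of Q_n inside the
first n' coordinates of Q_N whose bottom a layers are blue and whose top b layers become
blue after adding [N] \ [n'], with N ≥ n' ≥ n ≥ a + b, N ≥ m and
N ≥ n' + (n + 1 − a − b)m, the lattice Q_N contains a blue copy of Q_n or a red copy
of Q_m. -/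
theorem embedding_lemma (N m n n' a b : ℕ)
    (h1 : n' ≤ N) (h2 : n ≤ n') (h3 : a + b ≤ n) (h4 : m ≤ N)
    (h5 : N ≥ n' + (n + 1 - a - b) * m)
    (c : Finset (Fin N) → Bool)
    (i : Finset (Fin n) → Finset (Fin N))
    (hinj : Function.Injective i)
    (hord : ∀ S T : Finset (Fin n), S ⊆ T ↔ i S ⊆ i T)
    (hrange : ∀ S : Finset (Fin n), ∀ x ∈ i S, (x : ℕ) < n')
    (hbot : ∀ S : Finset (Fin n), S.card < a → c (i S) = false)
    (htop : ∀ S : Finset (Fin n), S.card > n - b →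
      c (i S ∪ Finset.univ.filter fun x : Fin N => n' ≤ (x : ℕ)) = false) :
    HasBlueCopy n N c ∨ HasRedCopy m N c :=
  embedding_lemma_general N m n n' a b h1 h3 h5 c i hord hrange hbot htop
end

section
/- Let N, m, n, a, b be nonnegative integers with n ≥ a + b and N ≥ n + (n + 1 − a − b)·m. If c is a 2-coloring of the Boolean lattice Q_N in which every subset of [N] of size less than a is blue and every subset of [N] of size greater than N − b is blue, then Q_N contains a blue copy of Q_n or a red copy of Q_m. -/
section

open Finset

theorem injective_of_subset_iff {α β : Type*} {f : Finset α → Finset β}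
    (hf : ∀ S T, S ⊆ T ↔ f S ⊆ f T) : Function.Injective f := fun S T hST =>
  subset_antisymm ((hf S T).2 hST.subset) ((hf T S).2 hST.symm.subset)

theorem subset_iff_map_union_subset_map_union {α β : Type*} [DecidableEq β] (ι : α ↪ β)
    {g : Finset α → Finset β} (hg : Monotone g) (hι : ∀ S x, ι x ∉ g S) (S T : Finset α) :
    S ⊆ T ↔ S.map ι ∪ g S ⊆ T.map ι ∪ g T := by
  refine ⟨fun h => union_subset_union (map_subset_map.2 h) (hg h), fun h x hx => ?_⟩
  rcases mem_union.1 (h (mem_union_left _ (mem_map_of_mem ι hx))) with hxT | hxg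
  · exact (mem_map' ι).1 hxT
  · exact absurd hxg (hι T x)

variable {N m : ℕ} {c : Finset (Fin N) → Bool}

theorem exists_blue_union_map_of_not_hasRedCopy (hred : ¬HasRedCopy m N c) (e : Fin m ↪ Fin N)
    {F : Finset (Fin N)} (he : ∀ x, e x ∉ F) : ∃ T : Finset (Fin m), c (F ∪ T.map e) = false := by
  by_contra! hT
  have hcopy := subset_iff_map_union_subset_map_union e monotone_const fun _ => he
  exact hred ⟨_, injective_of_subset_iff hcopy, hcopy, fun T => by
    simpa [union_comm] using hT T⟩

theorem exists_monotone_extension_blue_of_card_eq {α : Type*}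
    (hred : ¬HasRedCopy m N c) (ι : α ↪ Fin N) (e : Fin m ↪ Fin N) (k : ℕ)
    {D : Finset α → Finset (Fin N)} (hD : Monotone D) (he : ∀ S x, e x ∉ S.map ι ∪ D S) :
    ∃ D' : Finset α → Finset (Fin N), Monotone D' ∧ (∀ S, D' S ⊆ D S ∪ univ.map e) ∧
      (∀ S, S.card < k → D' S = D S) ∧ ∀ S, S.card = k → c (S.map ι ∪ D' S) = false := by
  choose T hT using fun S => exists_blue_union_map_of_not_hasRedCopy hred e (he S)
  refine ⟨fun S => D S ∪ (S.powersetCard k).biUnion fun S' => (T S').map e, ?_, ?_, ?_, ?_⟩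
  · exact fun S S' h =>
      union_subset_union (hD h) (biUnion_subset_biUnion_of_subset_left _ (powersetCard_mono h))
  · exact fun S => union_subset_union_right
      (biUnion_subset.2 fun _ _ => map_subset_map.2 (subset_univ _))
  · intro S hS
    simp [powersetCard_eq_empty.2 hS]
  · rintro S rfl
    simpa only [powersetCard_self, singleton_biUnion, ← union_assoc] using hT S

theorem exists_monotone_blue_of_card_lt {α : Type*} {n a : ℕ}
    (hred : ¬HasRedCopy m N c) (ι : α ↪ Fin N) (hι : ∀ x, (ι x : ℕ) < n)
    (hbot : ∀ S : Finset (Fin N), S.card < a → c S = false) (j : ℕ) (hj : n + j * m ≤ N) :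
    ∃ D : Finset α → Finset (Fin N), Monotone D ∧
      (∀ S, ∀ x ∈ D S, n ≤ (x : ℕ) ∧ (x : ℕ) < n + j * m) ∧
      ∀ S, S.card < a + j → c (S.map ι ∪ D S) = false := by
  induction j with
  | zero =>
    exact ⟨fun _ => ∅, monotone_const, by simp, fun S hS => by simpa using hbot _ (by simpa)⟩
  | succ j ih =>
    have hj' : n + j * m + m ≤ N := by rwa [add_one_mul, ← add_assoc] at hj
    obtain ⟨D, hD, hDbound, hDblue⟩ := ih (by omega)
    let e := (Fin.natAddEmb (n + j * m)).trans (Fin.castLEEmb hj')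
    have he : ∀ x, (e x : ℕ) = n + j * m + x := fun _ => rfl
    obtain ⟨D', hD', hD'D, hD'lt, hD'eq⟩ :=
      exists_monotone_extension_blue_of_card_eq hred ι e (a + j) hD fun S x hx => by
        rcases mem_union.1 hx with hx | hx
        · obtain ⟨y, -, hy⟩ := mem_map.1 hx
          have := hι y
          have := he x
          omega
        · have := hDbound S _ hx
          have := he x
          omega
    refine ⟨D', hD', fun S x hx => ?_, fun S hS => ?_⟩
    · rw [add_one_mul]
      rcases mem_union.1 (hD'D S hx) with hx | hx
      · have := hDbound S x hx
        omega
      · obtain ⟨y, -, rfl⟩ := mem_map.1 hx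
        have := y.isLt
        have := he y
        omega
    · rcases Nat.lt_or_ge S.card (a + j) with hlt | hge
      · rw [hD'lt S hlt]
        exact hDblue S hlt
      · exact hD'eq S (by omega)

theorem hasBlueCopy_of_blue_of_card_le {n b : ℕ} (hb : b ≤ n) (ι : Fin n ↪ Fin N)
    {D : Finset (Fin n) → Finset (Fin N)} (hD : Monotone D) (hDι : ∀ S x, ι x ∉ D S)
    (htop : ∀ S : Finset (Fin N), S.card > N - b → c S = false)
    (hblue : ∀ S : Finset (Fin n), S.card + b ≤ n → c (S.map ι ∪ D S) = false) :
    HasBlueCopy n N c := by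
  let g S := if S.card + b ≤ n then D S else (univ.map ι)ᶜ
  have hg : Monotone g := by
    intro S T hST
    have := card_le_card hST
    simp only [g]
    split_ifs with hS hT hT
    · exact hD hST
    · exact fun x hx => mem_compl.2 fun hxι => by
        obtain ⟨y, -, rfl⟩ := mem_map.1 hxι
        exact hDι S y hx
    · omega
    · exact Subset.rfl
  have hgι : ∀ S x, ι x ∉ g S := by
    intro S x
    simp only [g]
    split_ifs
    · exact hDι S x
    · simp
  have hcopy := subset_iff_map_union_subset_map_union ι hg hgι
  refine ⟨_, injective_of_subset_iff hcopy, hcopy, fun S => ?_⟩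
  by_cases hS : S.card + b ≤ n
  · simpa only [g, if_pos hS] using hblue S hS
  · have hnN : n ≤ N := by simpa using Fintype.card_le_of_embedding ι
    have hcard : (S.map ι ∪ (univ.map ι)ᶜ).card = S.card + (N - n) := by
      rw [card_union_of_disjoint (disjoint_compl_right.mono_left (map_subset_map.2
        (subset_univ S))), card_map, card_compl, card_map, card_univ, Fintype.card_fin,
        Fintype.card_fin]
    apply htop
    simp only [g, if_neg hS, hcard]
    omega

end

/-- blob-type lemma: if n ≥ a + b and N ≥ n + (n + 1 − a − b)m, and the
coloring makes every set of size less than a blue and every set of size greater than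
N − b blue, then Q_N contains a blue copy of Q_n or a red copy of Q_m. -/
theorem blob_lemma (N m n a b : ℕ)
    (h1 : a + b ≤ n) (h2 : N ≥ n + (n + 1 - a - b) * m)
    (c : Finset (Fin N) → Bool)
    (hbot : ∀ S : Finset (Fin N), S.card < a → c S = false)
    (htop : ∀ S : Finset (Fin N), S.card > N - b → c S = false) :
    HasBlueCopy n N c ∨ HasRedCopy m N c := by
  by_cases hred : HasRedCopy m N c
  · exact .inr hred
  have hnN : n ≤ N := le_trans (Nat.le_add_right _ _) h2
  obtain ⟨D, hD, hDbound, hDblue⟩ :=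
    exists_monotone_blue_of_card_lt hred (Fin.castLEEmb hnN) (fun x => x.isLt) hbot _ h2
  exact .inl (hasBlueCopy_of_blue_of_card_le (by omega) (Fin.castLEEmb hnN) hD
    (fun S x hx => (hDbound S _ hx).1.not_gt x.isLt) htop fun S hS => hDblue S (by omega))
end

section
/- For all integers n ≥ 3 and N ≥ n² − n, every 2-coloring of the Boolean lattice Q_N contains a copy of Q_n all of whose elements other than possibly the empty set and the full ground set [N] are red, or a copy of Q_n all of whose elements other than possibly the empty set and [N] are blue. (Equivalently, the modified poset Ramsey number satisfies R̂(Q_n, Q_n) ≤ n² − n for n ≥ 3.) -/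
/-- A copy of `Q m` in `Q N` all of whose elements, other than possibly `∅` and the
full ground set, are red. -/
def HasQuasiRedCopy (m N : ℕ) (c : Finset (Fin N) → Bool) : Prop :=
  ∃ f : Finset (Fin m) → Finset (Fin N),
    Function.Injective f ∧
    (∀ S T : Finset (Fin m), S ⊆ T ↔ f S ⊆ f T) ∧
    (∀ S : Finset (Fin m), f S ≠ ∅ → f S ≠ Finset.univ → c (f S) = true)

/-- A copy of `Q m` in `Q N` all of whose elements, other than possibly `∅` and the
full ground set, are blue. -/
def HasQuasiBlueCopy (m N : ℕ) (c : Finset (Fin N) → Bool) : Prop :=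
  ∃ f : Finset (Fin m) → Finset (Fin N),
    Function.Injective f ∧
    (∀ S T : Finset (Fin m), S ⊆ T ↔ f S ⊆ f T) ∧
    (∀ S : Finset (Fin m), f S ≠ ∅ → f S ≠ Finset.univ → c (f S) = false)

/-!
By pigeonhole (`N ≥ 2n - 1`) some `n` singletons `{x i}` share a colour `b`; suppose no
quasi-copy of `Q n` has colour `!b`. Then every subcube `[A, A ∪ V]` with `|V| = n` contains a
`b`-coloured set, for otherwise that subcube, with its bottom and top replaced by `∅` and `[N]`,
is a quasi-copy of colour `!b`.

Split `n(n - 2)` further points into blocks `0, …, n - 3` of size `n`. Send `{i}` to `{x i}`, and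
a set `S` with `2 ≤ |S| ≤ n - 1` to a `b`-coloured set of the subcube with bottom
`x(S) ∪ (blocks < |S| - 2)` spanned by block `|S| - 2`. Each image lies below the bottom of every
image of a larger superset, and `x i ∈ f S ↔ i ∈ S` shows that inclusion is reflected. With
`∅ ↦ ∅` and `[N] ↦ [N]` this is a quasi-copy of colour `b` on `n + n(n - 2) = n² - n` points.
-/

open Finset

def HasQuasiCopy (m N : ℕ) (c : Finset (Fin N) → Bool) (b : Bool) : Prop :=
  ∃ f : Finset (Fin m) → Finset (Fin N),
    Function.Injective f ∧
    (∀ S T : Finset (Fin m), S ⊆ T ↔ f S ⊆ f T) ∧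
    (∀ S : Finset (Fin m), f S ≠ ∅ → f S ≠ univ → c (f S) = b)

section QuasiCopy

variable {m N : ℕ} {c : Finset (Fin N) → Bool} {b : Bool}

lemma HasQuasiCopy.hasQuasiRedCopy_or_hasQuasiBlueCopy (h : HasQuasiCopy m N c b) :
    HasQuasiRedCopy m N c ∨ HasQuasiBlueCopy m N c := by
  cases b
  exacts [Or.inr h, Or.inl h]

lemma hasQuasiCopy_of_forall_mem_iff (x : Fin m → Fin N) (g : Finset (Fin m) → Finset (Fin N))
    (hmem : ∀ S, S ≠ ∅ → S ≠ univ → ∀ i, x i ∈ g S ↔ i ∈ S)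
    (hmono : ∀ S T, S ≠ ∅ → T ≠ univ → S ⊆ T → g S ⊆ g T)
    (hcol : ∀ S, S ≠ ∅ → S ≠ univ → c (g S) = b) :
    HasQuasiCopy m N c b := by
  classical
  let f : Finset (Fin m) → Finset (Fin N) := fun S =>
    if S = ∅ then ∅ else if S = univ then univ else g S
  have hf : ∀ S, S ≠ ∅ → S ≠ univ → f S = g S := fun S h₀ h₁ => by simp [f, h₀, h₁]
  have hfmem : ∀ S i, x i ∈ f S ↔ i ∈ S := by
    intro S i
    by_cases h₀ : S = ∅
    · simp [f, h₀]
    by_cases h₁ : S = univ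
    · subst h₁; simp [f, h₀]
    rw [hf S h₀ h₁, hmem S h₀ h₁]
  have hiff : ∀ S T, S ⊆ T ↔ f S ⊆ f T := by
    refine fun S T => ⟨fun hST => ?_, fun h i hi => (hfmem T i).1 (h ((hfmem S i).2 hi))⟩
    by_cases h₀ : S = ∅
    · simp [f, h₀]
    have hT₀ : T ≠ ∅ := by rintro rfl; exact h₀ (subset_empty.1 hST)
    by_cases h₁ : T = univ
    · subst h₁; simp [f, hT₀]
    have hS₁ : S ≠ univ := by rintro rfl; exact h₁ (univ_subset_iff.1 hST)
    rw [hf S h₀ hS₁, hf T hT₀ h₁]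
    exact hmono S T h₀ h₁ hST
  refine ⟨f, fun S T h => ((hiff S T).2 h.le).antisymm ((hiff T S).2 h.ge), hiff,
    fun S h₀ h₁ => ?_⟩
  have hS₀ : S ≠ ∅ := by rintro rfl; simp [f] at h₀
  have hS₁ : S ≠ univ := by rintro rfl; simp [f, hS₀] at h₁
  rw [hf S hS₀ hS₁]
  exact hcol S hS₀ hS₁

lemma exists_color_union_map_of_not_hasQuasiCopy {n : ℕ} (hq : ¬ HasQuasiCopy n N c (!b))
    (A : Finset (Fin N)) (v : Fin n ↪ Fin N) (hv : ∀ i, v i ∉ A) :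
    ∃ S : Finset (Fin n), c (A ∪ S.map v) = b := by
  by_contra! h
  refine hq (hasQuasiCopy_of_forall_mem_iff v (fun S => A ∪ S.map v) (fun S _ _ i => ?_)
    (fun S T _ _ hST => union_subset_union_right (map_subset_map.2 hST))
    (fun S _ _ => Bool.eq_not_iff.2 (h S)))
  simp [hv i]

end QuasiCopy

section Blocks

variable {α : Type*} {r n : ℕ} (y : Fin r × Fin n ↪ α)

def blocksBelow (k : ℕ) : Finset α := ({p | (p.1 : ℕ) < k} : Finset (Fin r × Fin n)).map y

variable {y}

@[simp]
lemma mem_blocksBelow {k : ℕ} {a : α} :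
    a ∈ blocksBelow y k ↔ ∃ p : Fin r × Fin n, (p.1 : ℕ) < k ∧ y p = a := by
  simp [blocksBelow]

@[simp]
lemma blocksBelow_zero : blocksBelow y 0 = ∅ := by
  simp [blocksBelow]

lemma blocksBelow_mono : Monotone (blocksBelow y) := fun k l hkl a => by
  simp only [mem_blocksBelow]
  exact fun ⟨p, hp, hpa⟩ => ⟨p, hp.trans_le hkl, hpa⟩

lemma notMem_blocksBelow {k : ℕ} {a : α} (h : ∀ p, a ≠ y p) : a ∉ blocksBelow y k := by
  simp [fun p => (h p).symm]

end Blocks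

section Layers

variable {r n N : ℕ} {c : Finset (Fin N) → Bool} {b : Bool}

lemma exists_color_between_blocksBelow (hq : ¬ HasQuasiCopy n N c (!b)) (x : Fin n ↪ Fin N)
    (hx : ∀ i, c {x i} = b) (y : Fin r × Fin n ↪ Fin N) (hxy : ∀ i p, x i ≠ y p)
    (S : Finset (Fin n)) (hS₀ : S.Nonempty) (hS : #S ≤ r + 1) :
    ∃ Z, S.map x ∪ blocksBelow y (#S - 2) ⊆ Z ∧ Z ⊆ S.map x ∪ blocksBelow y (#S - 1) ∧
      c Z = b := by
  obtain ⟨i, rfl⟩ | hS₂ : (∃ i, S = {i}) ∨ 2 ≤ #S := by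
    rcases (one_le_card.2 hS₀).eq_or_lt with h | h
    exacts [Or.inl (card_eq_one.1 h.symm), Or.inr h]
  · exact ⟨{x i}, by simp [hx]⟩
  let A := S.map x ∪ blocksBelow y (#S - 2)
  let v : Fin n ↪ Fin N := (Function.Embedding.sectR ⟨#S - 2, by omega⟩ _).trans y
  have hv : ∀ j, v j ∉ A := fun j => by simp [A, v, hxy]
  obtain ⟨T, hT⟩ := exists_color_union_map_of_not_hasQuasiCopy hq A v hv
  refine ⟨A ∪ T.map v, subset_union_left,
    union_subset (union_subset_union_right (blocksBelow_mono (by omega))) ?_, hT⟩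
  intro a ha
  simp only [mem_map] at ha
  obtain ⟨j, -, rfl⟩ := ha
  exact mem_union_right _ (mem_blocksBelow.2 ⟨(_, j), by dsimp only; omega, rfl⟩)

lemma hasQuasiCopy_of_forall_color_singleton (hq : ¬ HasQuasiCopy n N c (!b))
    (x : Fin n ↪ Fin N) (hx : ∀ i, c {x i} = b) (y : Fin (n - 2) × Fin n ↪ Fin N)
    (hxy : ∀ i p, x i ≠ y p) : HasQuasiCopy n N c b := by
  have hlayer : ∀ S : Finset (Fin n), S ≠ ∅ → S ≠ univ → ∃ Z,
      S.map x ∪ blocksBelow y (#S - 2) ⊆ Z ∧ Z ⊆ S.map x ∪ blocksBelow y (#S - 1) ∧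
        c Z = b := fun S h₀ h₁ => by
    have := (card_lt_iff_ne_univ S).2 h₁
    exact exists_color_between_blocksBelow hq x hx y hxy S (nonempty_iff_ne_empty.2 h₀)
      (by rw [Fintype.card_fin] at this; omega)
  choose! F hlow hhigh hcol using hlayer
  refine hasQuasiCopy_of_forall_mem_iff x F (fun S h₀ h₁ i => ⟨fun hi => ?_, fun hi => ?_⟩)
    (fun S T h₀ h₁ hST => ?_) hcol
  · have := hhigh S h₀ h₁ hi
    simpa [notMem_blocksBelow (hxy i)] using this
  · exact hlow S h₀ h₁ (mem_union_left _ (mem_map_of_mem x hi))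
  obtain rfl | hlt := hST.eq_or_ssubset
  · rfl
  have hT₀ : T ≠ ∅ := by rintro rfl; exact h₀ (subset_empty.1 hST)
  have hS₁ : S ≠ univ := by rintro rfl; exact h₁ (univ_subset_iff.1 hST)
  have hcard : #S - 1 ≤ #T - 2 := by
    have := card_lt_card hlt
    have := card_pos.2 (nonempty_iff_ne_empty.2 h₀)
    omega
  calc F S ⊆ S.map x ∪ blocksBelow y (#S - 1) := hhigh S h₀ hS₁
    _ ⊆ T.map x ∪ blocksBelow y (#T - 2) :=
      union_subset_union (map_subset_map.2 hST) (blocksBelow_mono hcard)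
    _ ⊆ F T := hlow T hT₀ h₁

end Layers

lemma Fintype.exists_embedding_forall_eq_of_mul_lt_card {α β : Type*} [Fintype α] [Fintype β]
    (f : α → β) {n : ℕ} (h : Fintype.card β * (n - 1) < Fintype.card α) :
    ∃ b, ∃ x : Fin n ↪ α, ∀ i, f (x i) = b := by
  classical
  obtain ⟨b, hb⟩ := Fintype.exists_lt_card_fiber_of_mul_lt_card f h
  obtain ⟨x, hx⟩ := Function.Embedding.exists_of_card_le_finset (α := Fin n) (s := {a | f a = b})
    (by simp only [Fintype.card_fin]; omega)
  exact ⟨b, x, fun i => by simpa using hx (Set.mem_range_self i)⟩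

lemma Function.Embedding.exists_embedding_forall_ne {α β γ : Type*} [Fintype α] [Fintype β]
    [Fintype γ] (x : β ↪ α) (h : Fintype.card β + Fintype.card γ ≤ Fintype.card α) :
    ∃ y : γ ↪ α, ∀ i p, x i ≠ y p := by
  classical
  obtain ⟨y, hy⟩ := Function.Embedding.exists_of_card_le_finset (α := γ) (s := (univ.map x)ᶜ)
    (by rw [card_compl, card_map, card_univ]; omega)
  refine ⟨y, fun i p hip => ?_⟩
  simpa [← hip] using hy (Set.mem_range_self p)

/-- if n ≥ 3 and N ≥ n² − n, every 2-coloring of Q_N contains a copy of Q_n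
all of whose elements other than possibly ∅ and [N] are red, or one all of whose elements
other than possibly ∅ and [N] are blue; i.e. R̂(Q_n, Q_n) ≤ n² − n. -/
theorem hat_ramsey_Qn_Qn (n N : ℕ) (hn : 3 ≤ n) (hN : N ≥ n ^ 2 - n)
    (c : Finset (Fin N) → Bool) :
    HasQuasiRedCopy n N c ∨ HasQuasiBlueCopy n N c := by
  have hsq : n ^ 2 = n * n := sq n
  have h3n : 3 * n ≤ n * n := Nat.mul_le_mul_right n hn
  have hblocks : (n - 2) * n = n * n - 2 * n := Nat.sub_mul n 2 n
  obtain ⟨b, x, hx⟩ := Fintype.exists_embedding_forall_eq_of_mul_lt_card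
    (fun a : Fin N => c {a}) (n := n) (by simp only [Fintype.card_bool, Fintype.card_fin]; omega)
  obtain ⟨y, hxy⟩ := x.exists_embedding_forall_ne (γ := Fin (n - 2) × Fin n)
    (by simp only [Fintype.card_prod, Fintype.card_fin]; omega)
  by_cases hq : HasQuasiCopy n N c (!b)
  · exact hq.hasQuasiRedCopy_or_hasQuasiBlueCopy
  · exact (hasQuasiCopy_of_forall_color_singleton hq x hx y hxy)
      |>.hasQuasiRedCopy_or_hasQuasiBlueCopy
end

section
/- The 2-coloring c of the Boolean lattice Q_4 defined by c(S) = blue if |S| is even and c(S) = red if |S| is odd contains no red copy of Q_2 and no blue copy of Q_3. Consequently R(Q_2, Q_3) > 4. -/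
def parityColoring (N : ℕ) (S : Finset (Fin N)) : Bool := decide (Odd S.card)

open Finset

section

variable {ι α : Type*}

theorem strictMono_of_subset_iff {f : Finset ι → Finset α} (hf : ∀ S T, S ⊆ T ↔ f S ⊆ f T) :
    StrictMono f :=
  (OrderEmbedding.ofMapLEIff f fun S T => (hf S T).symm).strictMono

theorem card_empty_add_two_mul_card_le [DecidableEq ι] {f : Finset ι → Finset α}
    (hf : StrictMono f) (hpar : ∀ S T, (f S).card ≡ (f T).card [MOD 2]) (S : Finset ι) :
    (f ∅).card + 2 * S.card ≤ (f S).card := by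
  induction S using Finset.induction_on with
  | empty => simp
  | insert a s ha ih =>
    have hlt : (f s).card < (f (insert a s)).card :=
      card_lt_card (hf (ssubset_insert ha))
    have hmod := hpar s (insert a s)
    rw [card_insert_of_notMem ha]
    unfold Nat.ModEq at hmod
    omega

end

theorem HasRedCopy.two_mul_add_one_le_of_parityColoring {m N : ℕ}
    (h : HasRedCopy m N (parityColoring N)) : 2 * m + 1 ≤ N := by
  obtain ⟨f, -, hf, hred⟩ := h
  have hodd (S : Finset (Fin m)) : (f S).card % 2 = 1 :=
    Nat.odd_iff.mp (by simpa [parityColoring] using hred S)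
  have hchain := card_empty_add_two_mul_card_le (strictMono_of_subset_iff hf)
    (fun S T => (hodd S).trans (hodd T).symm) univ
  have htop := card_le_univ (f univ)
  have hbot := hodd ∅
  simp only [card_univ, Fintype.card_fin] at hchain htop
  omega

theorem HasBlueCopy.two_mul_le_of_parityColoring {m N : ℕ}
    (h : HasBlueCopy m N (parityColoring N)) : 2 * m ≤ N := by
  obtain ⟨f, -, hf, hblue⟩ := h
  have heven (S : Finset (Fin m)) : (f S).card % 2 = 0 :=
    Nat.even_iff.mp (by simpa [parityColoring] using hblue S)
  have hchain := card_empty_add_two_mul_card_le (strictMono_of_subset_iff hf)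
    (fun S T => (heven S).trans (heven T).symm) univ
  have htop := card_le_univ (f univ)
  simp only [card_univ, Fintype.card_fin] at hchain htop
  omega

/-- the parity coloring of Q_4 (blue on sets of even size, red on sets of
odd size) contains no red copy of Q_2 and no blue copy of Q_3; hence R(Q_2, Q_3) > 4. -/
theorem parity_coloring_Q4 :
    ¬ HasRedCopy 2 4 (fun S : Finset (Fin 4) => decide (Odd S.card)) ∧
    ¬ HasBlueCopy 3 4 (fun S : Finset (Fin 4) => decide (Odd S.card)) :=
  ⟨fun h => absurd h.two_mul_add_one_le_of_parityColoring (by norm_num),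
    fun h => absurd h.two_mul_le_of_parityColoring (by norm_num)⟩
end

section
/- Let n ≥ 1 and ℓ ≥ 1 be integers and let N be an integer with N + 1 ≥ 2ℓ + n. Let c be a 2-coloring of the Boolean lattice Q_N, and suppose there exist red sets A₁, A₂, A₃ ⊆ [N], each of size at most ℓ − 1, such that for each i ∈ {1,2,3} there exists x_i ∈ A_i with x_i ∉ A_j for both j ≠ i. Then Q_N contains a copy of Q_3 all of whose elements other than possibly ∅ and [N] are red, or a copy of Q_n all of whose elements other than possibly ∅ and [N] are blue. -/
/-!
For each `k`, let `D_k` be the union of the two sets `A_j` with `j ≠ k`; it has at most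
`2ℓ - 2` elements, so at least `n` coordinates lie outside `D_k ∪ {x_k}`, and these span a
copy `S ↦ D_k ∪ S` of `Q_n` all of whose members contain `D_k` and avoid `x_k`. Either that
copy is blue, or it contains a red set `R_k`. In the second case for every `k`, the sets
`∅, A_i, R_k, [N]` form a copy of `Q_3` with atoms `A_i` and coatoms `R_k`: the private
element `x_i` lies in `A_i` and in `R_k` for `k ≠ i`, but not in `A_j` (`j ≠ i`) nor in `R_i`,
which forces all the non-inclusions.
-/

open Finset

theorem Finset.exists_embedding_fin_forall_notMem {β : Type*} [Fintype β] [DecidableEq β]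
    (s : Finset β) {n : ℕ} (h : n + #s ≤ Fintype.card β) : ∃ φ : Fin n ↪ β, ∀ i, φ i ∉ s := by
  have hcard : Fintype.card (Fin n) ≤ Fintype.card (sᶜ : Finset β) := by
    rw [Fintype.card_fin, Fintype.card_coe, card_compl]
    omega
  obtain ⟨ψ⟩ := Function.Embedding.nonempty_of_card_le hcard
  exact ⟨ψ.trans (Function.Embedding.subtype _), fun i => mem_compl.mp (ψ i).2⟩

theorem Finset.eq_empty_or_exists_eq_singleton_of_card_le_one {α : Type*} {s : Finset α}
    (h : #s ≤ 1) : s = ∅ ∨ ∃ a, s = {a} := by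
  rcases s.eq_empty_or_nonempty with hs | ⟨a, ha⟩
  · exact Or.inl hs
  · exact Or.inr ⟨a, eq_singleton_iff_unique_mem.mpr ⟨ha, fun b hb => card_le_one.mp h b hb a ha⟩⟩

theorem Finset.subset_iff_of_monotone_of_mem_iff {α β : Type*} {f : Finset α → Finset β}
    (hf : Monotone f) {x : α → β} (hx : ∀ i S, x i ∈ f S ↔ i ∈ S) (S T : Finset α) :
    f S ⊆ f T ↔ S ⊆ T :=
  ⟨fun h i hi => (hx i T).mp (h ((hx i S).mpr hi)), fun h => hf h⟩

def unionMapOrderEmbedding {α β : Type*} [DecidableEq β] (D : Finset β) (φ : α ↪ β)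
    (hφ : ∀ a, φ a ∉ D) : Finset α ↪o Finset β :=
  OrderEmbedding.ofMapLEIff (fun S => D ∪ S.map φ) fun S T => by
    refine ⟨fun hST a ha => ?_, fun hST => union_subset_union le_rfl (map_subset_map.mpr hST)⟩
    rcases mem_union.mp (hST (mem_union_right D (mem_map_of_mem φ ha))) with hD | hT
    · exact absurd hD (hφ a)
    · exact (mem_map' φ).mp hT

theorem unionMapOrderEmbedding_apply {α β : Type*} [DecidableEq β] (D : Finset β) (φ : α ↪ β)
    (hφ : ∀ a, φ a ∉ D) (S : Finset α) : unionMapOrderEmbedding D φ hφ S = D ∪ S.map φ :=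
  rfl

section AtomsCoatoms

variable {α β : Type*} [Fintype α] [DecidableEq α] [Fintype β] [DecidableEq β]

/-- Sends `{i}` to `A i` and `{k}ᶜ` to `R k`; in general, unions of the `A i` up to level `1`
and intersections of the `R k` from level `2` on (so `∅ ↦ ∅` and `univ ↦ univ`). -/
def atomsCoatomsMap (A R : α → Finset β) (S : Finset α) : Finset β :=
  if #S ≤ 1 then S.biUnion A else Sᶜ.inf R

variable {A R : α → Finset β}

theorem atomsCoatomsMap_monotone (hAR : ∀ i k, i ≠ k → A i ⊆ R k) :
    Monotone (atomsCoatomsMap A R) := by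
  intro S T hST
  have hcard := card_le_card hST
  unfold atomsCoatomsMap
  split_ifs with hS hT hT
  · exact biUnion_subset_biUnion_of_subset_left A hST
  · refine biUnion_subset.mpr fun i hi => Finset.le_inf fun k hk => hAR i k ?_
    rintro rfl
    exact mem_compl.mp hk (hST hi)
  · omega
  · exact inf_mono (compl_subset_compl.mpr hST)

theorem mem_atomsCoatomsMap_iff {x : α → β} (hxA : ∀ i j, x i ∈ A j ↔ i = j)
    (hxR : ∀ k, x k ∉ R k) (hAR : ∀ i k, i ≠ k → A i ⊆ R k) (i : α) (S : Finset α) :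
    x i ∈ atomsCoatomsMap A R S ↔ i ∈ S := by
  unfold atomsCoatomsMap
  split_ifs
  · simp [hxA]
  · rw [mem_inf]
    refine ⟨fun h => by_contra fun hi => hxR i (h i (mem_compl.mpr hi)), fun hi k hk => ?_⟩
    exact hAR i k (fun hik => mem_compl.mp hk (hik ▸ hi)) ((hxA i i).mpr rfl)

theorem atomsCoatomsMap_eq_true {c : Finset β → Bool} (hα : Fintype.card α ≤ 3)
    (hA : ∀ i, c (A i) = true) (hR : ∀ k, c (R k) = true) (S : Finset α)
    (h₀ : atomsCoatomsMap A R S ≠ ∅) (hu : atomsCoatomsMap A R S ≠ univ) :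
    c (atomsCoatomsMap A R S) = true := by
  unfold atomsCoatomsMap at *
  split_ifs at * with hS
  · obtain rfl | ⟨i, rfl⟩ := eq_empty_or_exists_eq_singleton_of_card_le_one hS
    · exact absurd biUnion_empty h₀
    · simpa using hA i
  · have hSc : #Sᶜ ≤ 1 := by
      rw [card_compl]
      omega
    obtain hSc | ⟨k, hSc⟩ := eq_empty_or_exists_eq_singleton_of_card_le_one hSc
    · rw [hSc, inf_empty] at hu
      exact absurd top_eq_univ hu
    · simpa [hSc] using hR k

end AtomsCoatoms

theorem HasBlueCopy.hasQuasiBlueCopy {m N : ℕ} {c : Finset (Fin N) → Bool}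
    (h : HasBlueCopy m N c) : HasQuasiBlueCopy m N c :=
  let ⟨f, hf, hle, hc⟩ := h
  ⟨f, hf, hle, fun S _ _ => hc S⟩

theorem hasQuasiRedCopy_three_of_atoms_coatoms {N : ℕ} {c : Finset (Fin N) → Bool}
    {A R : Fin 3 → Finset (Fin N)} {x : Fin 3 → Fin N} (hxA : ∀ i j, x i ∈ A j ↔ i = j)
    (hxR : ∀ k, x k ∉ R k) (hAR : ∀ i k, i ≠ k → A i ⊆ R k) (hA : ∀ i, c (A i) = true)
    (hR : ∀ k, c (R k) = true) : HasQuasiRedCopy 3 N c := by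
  have hsub := subset_iff_of_monotone_of_mem_iff (atomsCoatomsMap_monotone hAR)
    (mem_atomsCoatomsMap_iff hxA hxR hAR)
  exact ⟨atomsCoatomsMap A R, (OrderEmbedding.ofMapLEIff _ hsub).injective,
    fun S T => (hsub S T).symm, atomsCoatomsMap_eq_true (by simp) hA hR⟩

theorem exists_red_superset_or_hasBlueCopy {n N : ℕ} (c : Finset (Fin N) → Bool)
    {D : Finset (Fin N)} {z : Fin N} (hz : z ∉ D) (hcard : #D + 1 + n ≤ N) :
    (∃ R, D ⊆ R ∧ z ∉ R ∧ c R = true) ∨ HasBlueCopy n N c := by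
  obtain ⟨φ, hφ⟩ := (insert z D).exists_embedding_fin_forall_notMem (n := n) (by
    grw [card_insert_le, Fintype.card_fin]
    omega)
  let e := unionMapOrderEmbedding D φ fun i hi => hφ i (mem_insert_of_mem hi)
  by_cases hblue : ∀ S, c (e S) = false
  · exact Or.inr ⟨e, e.injective, fun S T => e.le_iff_le.symm, hblue⟩
  push Not at hblue
  obtain ⟨S, hS⟩ := hblue
  refine Or.inl ⟨e S, subset_union_left, ?_, by simpa using hS⟩
  rw [unionMapOrderEmbedding_apply, mem_union, mem_map]
  rintro (hzD | ⟨i, -, rfl⟩)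
  · exact hz hzD
  · exact hφ i (mem_insert_self _ D)

theorem three_private_sets_general (n ℓ N : ℕ) (hℓ : 1 ≤ ℓ)
    (hN : N + 1 ≥ 2 * ℓ + n)
    (c : Finset (Fin N) → Bool)
    (A : Fin 3 → Finset (Fin N))
    (hred : ∀ i, c (A i) = true)
    (hcard : ∀ i, (A i).card ≤ ℓ - 1)
    (hpriv : ∀ i, ∃ x ∈ A i, ∀ j, j ≠ i → x ∉ A j) :
    HasQuasiRedCopy 3 N c ∨ HasQuasiBlueCopy n N c := by
  choose x hxA hxpriv using hpriv
  have hx : ∀ i j, x i ∈ A j ↔ i = j := fun i j =>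
    ⟨fun h => by_contra fun hij => hxpriv i j (Ne.symm hij) h, fun h => h ▸ hxA i⟩
  have hxD : ∀ k, x k ∉ (univ.erase k).biUnion A := fun k => by
    simp [hx]
  have hD : ∀ k, #((univ.erase k).biUnion A) + 1 + n ≤ N := fun k => by
    have := card_biUnion_le_card_mul (univ.erase k) A (ℓ - 1) fun i _ => hcard i
    rw [card_erase_of_mem (mem_univ k), card_univ, Fintype.card_fin] at this
    omega
  by_cases hblue : HasQuasiBlueCopy n N c
  · exact Or.inr hblue
  choose R hDR hxR hR using fun k => (exists_red_superset_or_hasBlueCopy c (hxD k)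
    (hD k)).resolve_right (mt HasBlueCopy.hasQuasiBlueCopy hblue)
  refine Or.inl (hasQuasiRedCopy_three_of_atoms_coatoms hx hxR (fun i k hik => ?_) hred hR)
  exact (subset_biUnion_of_mem A (mem_erase.mpr ⟨hik, mem_univ i⟩)).trans (hDR k)

/-- if n, ℓ ≥ 1, N + 1 ≥ 2ℓ + n, and there are red sets A₁, A₂, A₃ of size
at most ℓ − 1 each containing a private element x_i ∉ A_j (j ≠ i), then Q_N contains a
copy of Q_3 red except possibly at ∅ and [N], or a copy of Q_n blue except possibly at
∅ and [N]. -/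
theorem three_private_sets (n ℓ N : ℕ) (hn : 1 ≤ n) (hℓ : 1 ≤ ℓ)
    (hN : N + 1 ≥ 2 * ℓ + n)
    (c : Finset (Fin N) → Bool)
    (A : Fin 3 → Finset (Fin N))
    (hred : ∀ i, c (A i) = true)
    (hcard : ∀ i, (A i).card ≤ ℓ - 1)
    (hpriv : ∀ i, ∃ x ∈ A i, ∀ j, j ≠ i → x ∉ A j) :
    HasQuasiRedCopy 3 N c ∨ HasQuasiBlueCopy n N c :=
  three_private_sets_general n ℓ N hℓ hN c A hred hcard hpriv
end

section
/- Let m ≥ 3, n ≥ 1 and ℓ ≥ 1 be integers and let N be an integer with N ≥ m(ℓ − 1) + (m − 2)n. Let c be a 2-coloring of the Boolean lattice Q_N, and suppose there exist red sets A₁, …, A_m ⊆ [N], each of size at most ℓ − 1, such that for each i ∈ [m] there exists x_i ∈ A_i with x_i ∉ A_j for all j ∈ [m] \ {i}. Then Q_N contains a copy of Q_m all of whose elements other than possibly ∅ and [N] are red, or a copy of Q_n all of whose elements other than possibly ∅ and [N] are blue. -/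
/- If there is no quasi-blue copy of `Q_n`, every cube `{C ∪ T : T ⊆ B}` over a set
`C` and an `n`-set `B` disjoint from it contains a red set. Send `∅ ↦ ∅`, `[m] ↦ [N]`,
`{i} ↦ A_i`, and a set `S` with `2 ≤ |S| ≤ m - 1` to a red set between `A_S ∪ D_{|S|}` and
`A_S ∪ D_{|S| + 1}`, where `A_S = ⋃_{i ∈ S} A_i` and `D_k` is the union of pairwise disjoint
`n`-sets `B_2, …, B_{k-1}` chosen outside all `A_i`; the bound on `N` leaves room for them.
The levels make the map monotone, and the private elements `x_i` (`x_i` lies in the image of `S`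
iff `i ∈ S`) make it an order embedding. -/

open Finset

lemma exists_red_union_map {n N : ℕ} {c : Finset (Fin N) → Bool}
    (hblue : ¬ HasQuasiBlueCopy n N c) (C : Finset (Fin N)) (ι : Fin n ↪ Fin N)
    (hι : ∀ t, ι t ∉ C) :
    ∃ T : Finset (Fin n), c (C ∪ T.map ι) = true := by
  by_contra! hcon
  have hiff : ∀ S T : Finset (Fin n), S ⊆ T ↔ C ∪ S.map ι ⊆ C ∪ T.map ι := by
    refine fun S T => ⟨fun h => union_subset_union_right (map_subset_map.2 h), fun h s hs => ?_⟩
    have hsT : ι s ∈ C ∪ T.map ι := h (mem_union_right _ (mem_map_of_mem ι hs))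
    simpa [hι s] using hsT
  exact hblue ⟨fun T => C ∪ T.map ι,
    fun S T h => ((hiff S T).2 h.le).antisymm ((hiff T S).2 h.ge), hiff,
    fun S _ _ => by simpa using hcon S⟩

lemma mem_biUnion_of_private {α β : Type*} [DecidableEq β] {A : α → Finset β} {x : α → β}
    (hxA : ∀ i, x i ∈ A i) (hxnot : ∀ i j, j ≠ i → x i ∉ A j) (i : α) (S : Finset α) :
    x i ∈ S.biUnion A ↔ i ∈ S := by
  refine ⟨fun h => ?_, fun h => mem_biUnion.2 ⟨i, h, hxA i⟩⟩
  obtain ⟨j, hjS, hj⟩ := mem_biUnion.1 h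
  by_cases hji : j = i
  · exact hji ▸ hjS
  · exact absurd hj (hxnot i j hji)

section WithEnds

variable {α β : Type*} [Fintype α] [DecidableEq α] [Fintype β]

def withEnds (g : Finset α → Finset β) (S : Finset α) : Finset β :=
  if S = ∅ then ∅ else if S = univ then univ else g S

lemma withEnds_of_ne {g : Finset α → Finset β} {S : Finset α} (h0 : S ≠ ∅) (h1 : S ≠ univ) :
    withEnds g S = g S := by
  simp [withEnds, h0, h1]

lemma ne_empty_ne_univ_of_withEnds {g : Finset α → Finset β} {S : Finset α}
    (h0 : withEnds g S ≠ ∅) (h1 : withEnds g S ≠ univ) : S ≠ ∅ ∧ S ≠ univ := by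
  constructor <;> rintro rfl <;> simp_all [withEnds]

lemma subset_iff_withEnds_subset [DecidableEq β] {A : α → Finset β} {x : α → β}
    (hxA : ∀ i, x i ∈ A i) (hxnot : ∀ i j, j ≠ i → x i ∉ A j)
    {D : ℕ → Finset β} (hD : Monotone D) (hxD : ∀ i k, x i ∉ D k) {g : Finset α → Finset β}
    (hlow : ∀ S, S ≠ ∅ → S ≠ univ → S.biUnion A ∪ D #S ⊆ g S)
    (hup : ∀ S, S ≠ ∅ → S ≠ univ → g S ⊆ S.biUnion A ∪ D (#S + 1))
    (S T : Finset α) : S ⊆ T ↔ withEnds g S ⊆ withEnds g T := by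
  have hmem : ∀ i S, x i ∈ withEnds g S ↔ i ∈ S := by
    intro i S
    by_cases h0 : S = ∅
    · simp [withEnds, h0]
    by_cases h1 : S = univ
    · subst h1
      simp [withEnds, h0]
    rw [withEnds_of_ne h0 h1, ← mem_biUnion_of_private hxA hxnot]
    refine ⟨fun h => ?_, fun h => hlow S h0 h1 (mem_union_left _ h)⟩
    simpa [hxD] using hup S h0 h1 h
  refine ⟨fun hST => ?_, fun h i hi => (hmem i T).1 (h ((hmem i S).2 hi))⟩
  by_cases hS0 : S = ∅
  · simp [withEnds, hS0]
  have hT0 : T ≠ ∅ := fun h => hS0 (subset_empty.1 (h ▸ hST))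
  by_cases hT1 : T = univ
  · subst hT1
    simp [withEnds, hT0]
  obtain rfl | hlt := eq_or_ssubset_of_subset hST
  · rfl
  have hS1 : S ≠ univ := fun h => hT1 (univ_subset_iff.1 (h ▸ hST))
  rw [withEnds_of_ne hS0 hS1, withEnds_of_ne hT0 hT1]
  calc g S ⊆ S.biUnion A ∪ D (#S + 1) := hup S hS0 hS1
    _ ⊆ T.biUnion A ∪ D #T :=
      union_subset_union (biUnion_subset_biUnion_of_subset_left A hST) (hD (card_lt_card hlt))
    _ ⊆ g T := hlow T hT0 hT1

end WithEnds

section Blocks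

variable {k n N : ℕ}

-- The block `e (j, ·)` serves level `j + 2`; these are the blocks below level `l`.
def lowerBlocks (e : Fin k × Fin n ↪ Fin N) (l : ℕ) : Finset (Fin N) :=
  ({p | (p.1 : ℕ) + 2 < l} : Finset (Fin k × Fin n)).map e

lemma mem_lowerBlocks {e : Fin k × Fin n ↪ Fin N} {l : ℕ} {y : Fin N} :
    y ∈ lowerBlocks e l ↔ ∃ p : Fin k × Fin n, (p.1 : ℕ) + 2 < l ∧ e p = y := by
  simp [lowerBlocks]

lemma map_mem_lowerBlocks {e : Fin k × Fin n ↪ Fin N} {l : ℕ} {p : Fin k × Fin n} :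
    e p ∈ lowerBlocks e l ↔ (p.1 : ℕ) + 2 < l := by
  simp [lowerBlocks]

lemma lowerBlocks_mono (e : Fin k × Fin n ↪ Fin N) : Monotone (lowerBlocks e) := by
  intro l l' hl y hy
  obtain ⟨p, hp, rfl⟩ := mem_lowerBlocks.1 hy
  exact map_mem_lowerBlocks.2 (by omega)

lemma lowerBlocks_eq_empty (e : Fin k × Fin n ↪ Fin N) {l : ℕ} (hl : l ≤ 2) :
    lowerBlocks e l = ∅ := by
  ext y
  simp only [mem_lowerBlocks, notMem_empty, iff_false, not_exists, not_and]
  omega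

lemma notMem_lowerBlocks {e : Fin k × Fin n ↪ Fin N} {s : Finset (Fin N)}
    (he : ∀ p, e p ∉ s) {y : Fin N} (hy : y ∈ s) (l : ℕ) : y ∉ lowerBlocks e l := by
  rintro hl
  obtain ⟨p, -, rfl⟩ := mem_lowerBlocks.1 hl
  exact he p hy

end Blocks

lemma exists_red_between {m n N : ℕ} {c : Finset (Fin N) → Bool}
    (hblue : ¬ HasQuasiBlueCopy n N c) {A : Fin m → Finset (Fin N)} (hred : ∀ i, c (A i) = true)
    {e : Fin (m - 2) × Fin n ↪ Fin N} (he : ∀ p i, e p ∉ A i)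
    (S : Finset (Fin m)) (h0 : S ≠ ∅) (h1 : S ≠ univ) :
    ∃ G, c G = true ∧ S.biUnion A ∪ lowerBlocks e #S ⊆ G ∧
      G ⊆ S.biUnion A ∪ lowerBlocks e (#S + 1) := by
  have hpos : 0 < #S := card_pos.2 (nonempty_iff_ne_empty.2 h0)
  have hlt : #S < m := by simpa using (card_lt_iff_ne_univ S).2 h1
  obtain hS1 | hS2 : #S = 1 ∨ 2 ≤ #S := by omega
  · obtain ⟨i, rfl⟩ := card_eq_one.1 hS1
    refine ⟨A i, hred i, ?_, ?_⟩ <;>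
      simp [lowerBlocks_eq_empty e (le_refl 2), lowerBlocks_eq_empty e (by omega : 1 ≤ 2)]
  set j : Fin (m - 2) := ⟨#S - 2, by omega⟩
  set C := S.biUnion A ∪ lowerBlocks e #S
  have hjC : ∀ t, e (j, t) ∉ C := by
    intro t ht
    rcases mem_union.1 ht with hA | hD
    · obtain ⟨i, -, hi⟩ := mem_biUnion.1 hA
      exact he _ i hi
    · have := map_mem_lowerBlocks.1 hD
      simp only [j] at this
      omega
  obtain ⟨T, hT⟩ := exists_red_union_map hblue C ((Function.Embedding.sectR j _).trans e) hjC
  refine ⟨_, hT, subset_union_left, union_subset ?_ ?_⟩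
  · exact union_subset_union_right (lowerBlocks_mono e (Nat.le_succ _))
  · intro y hy
    obtain ⟨t, -, rfl⟩ := mem_map.1 hy
    refine mem_union_right _ (map_mem_lowerBlocks.2 ?_)
    simp only [Function.Embedding.sectR_apply, j]
    omega

theorem m_private_sets_general (m n ℓ N : ℕ)
    (hN : N ≥ m * (ℓ - 1) + (m - 2) * n)
    (c : Finset (Fin N) → Bool)
    (A : Fin m → Finset (Fin N))
    (hred : ∀ i, c (A i) = true)
    (hcard : ∀ i, (A i).card ≤ ℓ - 1)
    (hpriv : ∀ i, ∃ x ∈ A i, ∀ j, j ≠ i → x ∉ A j) :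
    HasQuasiRedCopy m N c ∨ HasQuasiBlueCopy n N c := by
  by_cases hblue : HasQuasiBlueCopy n N c
  · exact Or.inr hblue
  choose x hxA hxnot using hpriv
  set U := univ.biUnion A
  have hU : #U ≤ m * (ℓ - 1) := by
    simpa using card_biUnion_le_card_mul univ A (ℓ - 1) fun i _ => hcard i
  obtain ⟨emb⟩ : Nonempty (Fin (m - 2) × Fin n ↪ (Uᶜ : Finset (Fin N))) :=
    Function.Embedding.nonempty_of_card_le (by simp; omega)
  set e := emb.trans (Function.Embedding.subtype _)
  have he : ∀ p i, e p ∉ A i := fun p i hp =>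
    mem_compl.1 (emb p).2 (mem_biUnion.2 ⟨i, mem_univ i, hp⟩)
  choose! g hg hlow hup using exists_red_between hblue hred he
  have hiff := subset_iff_withEnds_subset hxA hxnot (lowerBlocks_mono e)
    (fun i => notMem_lowerBlocks (he · i) (hxA i)) hlow hup
  refine Or.inl ⟨withEnds g,
    fun S T h => ((hiff S T).2 h.le).antisymm ((hiff T S).2 h.ge), hiff, fun S h0 h1 => ?_⟩
  obtain ⟨hS0, hS1⟩ := ne_empty_ne_univ_of_withEnds h0 h1
  rw [withEnds_of_ne hS0 hS1]
  exact hg S hS0 hS1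

/-- if m ≥ 3, n, ℓ ≥ 1, N ≥ m(ℓ − 1) + (m − 2)n, and there are red sets
A₁, …, A_m of size at most ℓ − 1 each containing a private element x_i ∉ A_j (j ≠ i),
then Q_N contains a copy of Q_m red except possibly at ∅ and [N], or a copy of Q_n blue
except possibly at ∅ and [N]. -/
theorem m_private_sets (m n ℓ N : ℕ) (hm : 3 ≤ m) (hn : 1 ≤ n) (hℓ : 1 ≤ ℓ)
    (hN : N ≥ m * (ℓ - 1) + (m - 2) * n)
    (c : Finset (Fin N) → Bool)
    (A : Fin m → Finset (Fin N))
    (hred : ∀ i, c (A i) = true)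
    (hcard : ∀ i, (A i).card ≤ ℓ - 1)
    (hpriv : ∀ i, ∃ x ∈ A i, ∀ j, j ≠ i → x ∉ A j) :
    HasQuasiRedCopy m N c ∨ HasQuasiBlueCopy n N c :=
  m_private_sets_general m n ℓ N hN c A hred hcard hpriv
end

section
/- For all integers m ≥ 1, n ≥ 1, and N ≥ n + (n + 1)·m, every 2-coloring of the Boolean lattice Q_N contains a red copy of Q_m or a blue copy of Q_n. (Consequently R(Q_m, Q_n) ≤ mn + n + m.) -/
/-!
Split the ground set into a set `X` of size `n` and `n + 1` levels `Y₀, …, Yₙ` of size `m`.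
If there is no red `Q_m`, then for every `A` disjoint from a level `Y`, some `A ∪ V` with
`V ⊆ Y` is blue, since otherwise `V ↦ A ∪ V` is a red copy of `Q_m`. Build a blue copy `f`
of `Q_n` by induction on `S ⊆ [n]`: `f S` is a blue extension of
`X_S ∪ ⋃_{T ⊊ S} f T` by a subset of `Y_{|S|}`. Since `f T` only uses levels up to `|T|`,
this base is disjoint from `Y_{|S|}`, and since the `X`-part of `f S` is exactly `X_S`,
`f` reflects inclusion.
-/

open Finset Function

theorem Finset.union_map_subset_union_map_iff {α β : Type*} [DecidableEq β] {A : Finset β}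
    (w : α ↪ β) (hA : ∀ i, w i ∉ A) {S T : Finset α} :
    A ∪ S.map w ⊆ A ∪ T.map w ↔ S ⊆ T := by
  refine ⟨fun h i hi => ?_, fun h => union_subset_union_right (map_subset_map.2 h)⟩
  rcases mem_union.1 (h (mem_union_right _ (mem_map_of_mem w hi))) with hiA | hiT
  · exact absurd hiA (hA i)
  · exact (mem_map' w).1 hiT

namespace PosetRamsey

variable {m n N : ℕ} {c : Finset (Fin N) → Bool}

theorem exists_color_union_map_eq_false (hred : ¬ HasRedCopy m N c) {A : Finset (Fin N)}
    (w : Fin m ↪ Fin N) (hA : ∀ i, w i ∉ A) :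
    ∃ S : Finset (Fin m), c (A ∪ S.map w) = false := by
  by_contra! hallRed
  have hiff (S T : Finset (Fin m)) := union_map_subset_union_map_iff (S := S) (T := T) w hA
  exact hred ⟨fun S => A ∪ S.map w,
    fun S T h => ((hiff S T).1 h.le).antisymm ((hiff T S).1 h.ge),
    fun S T => (hiff S T).symm, fun S => by simpa using hallRed S⟩

-- The choice is arbitrary unless `color_blueExtend` applies.
noncomputable def blueExtend (c : Finset (Fin N) → Bool) (w : Fin m ↪ Fin N)
    (A : Finset (Fin N)) : Finset (Fin N) :=
  A ∪ (Classical.epsilon fun S : Finset (Fin m) => c (A ∪ S.map w) = false).map w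

theorem subset_blueExtend (w : Fin m ↪ Fin N) (A : Finset (Fin N)) :
    A ⊆ blueExtend c w A :=
  subset_union_left

theorem blueExtend_subset (w : Fin m ↪ Fin N) (A : Finset (Fin N)) :
    blueExtend c w A ⊆ A ∪ univ.map w :=
  union_subset_union_right (map_subset_map.2 (subset_univ _))

theorem color_blueExtend (hred : ¬ HasRedCopy m N c) {A : Finset (Fin N)}
    (w : Fin m ↪ Fin N) (hA : ∀ i, w i ∉ A) : c (blueExtend c w A) = false :=
  Classical.epsilon_spec (exists_color_union_map_eq_false hred w hA)

section BlueCopy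

-- `e` places `X` as `e ∘ inl` and the level `Y_k` as `e (inr (k, ·))`.
variable (c) (e : Fin n ⊕ Fin (n + 1) × Fin m ↪ Fin N)

def rank (S : Finset (Fin n)) : Fin (n + 1) :=
  ⟨#S, Nat.lt_succ_of_le (by simpa using card_le_univ S)⟩

theorem rank_lt_rank {S T : Finset (Fin n)} (h : T ⊂ S) : rank T < rank S :=
  card_lt_card h

def level (k : Fin (n + 1)) : Fin m ↪ Fin N :=
  (Embedding.sectR k (Fin m)).trans (Embedding.inr.trans e)

noncomputable def blueCopy : Finset (Fin n) → Finset (Fin N) :=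
  strongInduction fun S f => blueExtend c (level e (rank S))
    (S.map (Embedding.inl.trans e) ∪
      S.ssubsets.attach.biUnion fun T => f T.1 (mem_ssubsets.1 T.2))

noncomputable def lowerPart (S : Finset (Fin n)) : Finset (Fin N) :=
  S.map (Embedding.inl.trans e) ∪ S.ssubsets.biUnion (blueCopy c e)

theorem blueCopy_eq (S : Finset (Fin n)) :
    blueCopy c e S = blueExtend c (level e (rank S)) (lowerPart c e S) := by
  rw [blueCopy, strongInduction_eq, lowerPart, ← blueCopy, S.ssubsets.attach_biUnion]

theorem lowerPart_subset {S : Finset (Fin n)}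
    (ih : ∀ T ⊂ S, blueCopy c e T ⊆ (T.disjSum (Iic (rank T) ×ˢ univ)).map e) :
    lowerPart c e S ⊆ (S.disjSum (Iio (rank S) ×ˢ univ)).map e := by
  refine union_subset (fun a ha => ?_) (biUnion_subset.2 fun T hT => ?_)
  · obtain ⟨i, hi, rfl⟩ := mem_map.1 ha
    exact mem_map_of_mem e (inl_mem_disjSum.2 hi)
  · have hTS := mem_ssubsets.1 hT
    refine (ih T hTS).trans (map_subset_map.2 (disjSum_mono hTS.subset ?_))
    exact product_subset_product_left fun k hk =>
      mem_Iio.2 ((mem_Iic.1 hk).trans_lt (rank_lt_rank hTS))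

theorem blueCopy_subset (S : Finset (Fin n)) :
    blueCopy c e S ⊆ (S.disjSum (Iic (rank S) ×ˢ univ)).map e := by
  induction S using strongInduction with
  | H S ih =>
    rw [blueCopy_eq]
    refine (blueExtend_subset _ _).trans (union_subset ?_ fun a ha => ?_)
    · exact (lowerPart_subset c e ih).trans <| map_subset_map.2 <|
        disjSum_mono subset_rfl (product_subset_product_left Iio_subset_Iic_self)
    · obtain ⟨j, -, rfl⟩ := mem_map.1 ha
      exact mem_map_of_mem e (inr_mem_disjSum.2 (by simp))

theorem level_rank_notMem_lowerPart (S : Finset (Fin n)) (j : Fin m) :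
    level e (rank S) j ∉ lowerPart c e S := fun h => by
  simpa [level] using lowerPart_subset c e (fun T _ => blueCopy_subset c e T) h

theorem lowerPart_subset_blueCopy (S : Finset (Fin n)) : lowerPart c e S ⊆ blueCopy c e S := by
  rw [blueCopy_eq]
  exact subset_blueExtend _ _

theorem color_blueCopy (hred : ¬ HasRedCopy m N c) (S : Finset (Fin n)) :
    c (blueCopy c e S) = false := by
  rw [blueCopy_eq]
  exact color_blueExtend hred _ (level_rank_notMem_lowerPart c e S)

theorem blueCopy_mono {S T : Finset (Fin n)} (h : S ⊆ T) : blueCopy c e S ⊆ blueCopy c e T := by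
  obtain rfl | hST := eq_or_ssubset_of_subset h
  · exact subset_rfl
  · exact (subset_biUnion_of_mem _ (mem_ssubsets.2 hST)).trans
      (subset_union_right.trans (lowerPart_subset_blueCopy c e T))

theorem subset_of_blueCopy_subset {S T : Finset (Fin n)} (h : blueCopy c e S ⊆ blueCopy c e T) :
    S ⊆ T := fun i hi => by
  have hi' : e (.inl i) ∈ blueCopy c e S :=
    lowerPart_subset_blueCopy c e S (mem_union_left _ (mem_map_of_mem _ hi))
  simpa using blueCopy_subset c e T (h hi')

end BlueCopy

theorem hasBlueCopy_of_not_hasRedCopy (e : Fin n ⊕ Fin (n + 1) × Fin m ↪ Fin N)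
    (hred : ¬ HasRedCopy m N c) : HasBlueCopy n N c :=
  ⟨blueCopy c e,
    fun _ _ h => (subset_of_blueCopy_subset c e h.le).antisymm (subset_of_blueCopy_subset c e h.ge),
    fun _ _ => ⟨blueCopy_mono c e, subset_of_blueCopy_subset c e⟩, color_blueCopy c e hred⟩

end PosetRamsey

theorem ramsey_upper_mn_general (m n N : ℕ)
    (hN : N ≥ n + (n + 1) * m)
    (c : Finset (Fin N) → Bool) :
    HasRedCopy m N c ∨ HasBlueCopy n N c := by
  obtain ⟨e⟩ : Nonempty (Fin n ⊕ Fin (n + 1) × Fin m ↪ Fin N) :=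
    Embedding.nonempty_of_card_le (by simpa using hN)
  exact or_iff_not_imp_left.2 (PosetRamsey.hasBlueCopy_of_not_hasRedCopy e)

/-- if m, n ≥ 1 and N ≥ n + (n + 1)m, every 2-coloring of Q_N contains a
red copy of Q_m or a blue copy of Q_n; consequently R(Q_m, Q_n) ≤ mn + n + m. -/
theorem ramsey_upper_mn (m n N : ℕ) (hm : 1 ≤ m) (hn : 1 ≤ n)
    (hN : N ≥ n + (n + 1) * m)
    (c : Finset (Fin N) → Bool) :
    HasRedCopy m N c ∨ HasBlueCopy n N c :=
  ramsey_upper_mn_general m n N hN c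
end
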